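/- arXiv:2411.11538 — 2 statements merged into one kernel-verified Lean document; each statement's English description precedes it below -/
import Mathlib

section
/- For every natural number ν and every real σ ≥ 1, ∑_{ℓ=0}^{ν} (ℓ!)^σ ((ν-ℓ)!)^σ · C(ν,ℓ) ≤ ((ν+1)!)^σ, where C(ν,ℓ) is the binomial coefficient. -/
lemma aux_rpow (x : ℝ) (hx : 0 < x) (σ : ℝ) : x ^ (σ - 1) * x = x ^ σ := by
  rw [Real.rpow_sub hx, Real.rpow_one, div_mul_cancel₀]
  exact ne_of_gt hx

theorem stmt_3 (ν : ℕ) (σ : ℝ) (hσ : 1 ≤ σ) :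
    ∑ ℓ ∈ Finset.range (ν + 1),
        (Nat.factorial ℓ : ℝ) ^ σ * (Nat.factorial (ν - ℓ) : ℝ) ^ σ * (Nat.choose ν ℓ : ℝ)
      ≤ (Nat.factorial (ν + 1) : ℝ) ^ σ := by
  have hterm : ∀ ℓ ∈ Finset.range (ν + 1),
      (Nat.factorial ℓ : ℝ) ^ σ * (Nat.factorial (ν - ℓ) : ℝ) ^ σ * (Nat.choose ν ℓ : ℝ)
        ≤ (Nat.factorial ν : ℝ) ^ (σ - 1) * (Nat.factorial ν : ℝ) := by
    intro ℓ hℓ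
    have hℓν : ℓ ≤ ν := Nat.lt_succ_iff.mp (Finset.mem_range.mp hℓ)
    have key : (Nat.factorial ℓ) * (Nat.factorial (ν - ℓ)) * Nat.choose ν ℓ = Nat.factorial ν := by
      rw [← Nat.choose_mul_factorial_mul_factorial hℓν]; ring
    have hle : (Nat.factorial ℓ : ℝ) * (Nat.factorial (ν - ℓ)) ≤ (Nat.factorial ν : ℝ) := by
      exact_mod_cast Nat.le_of_dvd (Nat.factorial_pos ν)
        (Nat.factorial_mul_factorial_dvd_factorial hℓν)
    have h0 : (0:ℝ) ≤ (Nat.factorial ℓ : ℝ) * (Nat.factorial (ν - ℓ)) := by positivity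
    have hpow : ((Nat.factorial ℓ : ℝ) * (Nat.factorial (ν - ℓ))) ^ (σ - 1)
        ≤ (Nat.factorial ν : ℝ) ^ (σ - 1) :=
      Real.rpow_le_rpow h0 hle (by linarith)
    have hsplit : (Nat.factorial ℓ : ℝ) ^ σ * (Nat.factorial (ν - ℓ) : ℝ) ^ σ * (Nat.choose ν ℓ : ℝ)
        = ((Nat.factorial ℓ : ℝ) * (Nat.factorial (ν - ℓ))) ^ (σ - 1)
          * ((Nat.factorial ℓ : ℝ) * (Nat.factorial (ν - ℓ)) * (Nat.choose ν ℓ : ℝ)) := by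
      rw [Real.mul_rpow (by positivity) (by positivity)]
      rw [← aux_rpow _ (by positivity : (0:ℝ) < (Nat.factorial ℓ : ℝ)) σ,
          ← aux_rpow _ (by positivity : (0:ℝ) < (Nat.factorial (ν - ℓ) : ℝ)) σ]
      ring
    rw [hsplit]
    have hkey' : (Nat.factorial ℓ : ℝ) * (Nat.factorial (ν - ℓ)) * (Nat.choose ν ℓ : ℝ)
        = (Nat.factorial ν : ℝ) := by exact_mod_cast congrArg (Nat.cast : ℕ → ℝ) key
    rw [hkey']
    exact mul_le_mul_of_nonneg_right hpow (by positivity)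
  calc ∑ ℓ ∈ Finset.range (ν + 1),
        (Nat.factorial ℓ : ℝ) ^ σ * (Nat.factorial (ν - ℓ) : ℝ) ^ σ * (Nat.choose ν ℓ : ℝ)
      ≤ ∑ _ℓ ∈ Finset.range (ν + 1), (Nat.factorial ν : ℝ) ^ (σ - 1) * (Nat.factorial ν : ℝ) :=
        Finset.sum_le_sum hterm
    _ = (ν + 1 : ℝ) * ((Nat.factorial ν : ℝ) ^ (σ - 1) * (Nat.factorial ν : ℝ)) := by
        rw [Finset.sum_const, Finset.card_range]; ring
    _ ≤ (Nat.factorial (ν + 1) : ℝ) ^ σ := by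
        have h1 : (ν + 1 : ℝ) ≤ (ν + 1 : ℝ) ^ σ := by
          nth_rewrite 1 [← Real.rpow_one (ν + 1 : ℝ)]
          exact Real.rpow_le_rpow_of_exponent_le (by linarith) hσ
        have h2 := aux_rpow (Nat.factorial ν : ℝ) (by positivity) σ
        have h3 : (Nat.factorial (ν + 1) : ℝ) = (ν + 1 : ℝ) * (Nat.factorial ν : ℝ) := by
          rw [Nat.factorial_succ]; push_cast; ring
        rw [h3, Real.mul_rpow (by positivity) (by positivity), h2]
        exact mul_le_mul_of_nonneg_right h1 (by positivity)
end

section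
/- Let c_0, c > 0, σ ≥ 1, let b = (b_j) be a sequence of nonnegative reals, and let (Ξ_ν) indexed by finitely supported multi-indices satisfy Ξ_0 ≤ c_0 and, for all ν ≠ 0, Ξ_ν ≤ c ∑_{0 ≠ m ≤ ν} C(ν,m) (|m|!)^σ b^m Ξ_{ν-m}. Then for every multi-index ν, Ξ_ν ≤ c_0 · c^{1-δ_{|ν|,0}} · (c+1)^{max(|ν|-1,0)} · (|ν|!)^σ · b^ν. -/
/-!
Grouping the multi-indices `m ≤ ν` by their degree `k`, the multi-index Vandermonde identity
`∑_{m ≤ ν, |m| = k} C(ν, m) = C(|ν|, k)` turns the recursion into one in `|ν|` alone. Since `σ ≥ 1`,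
`C(n, k) (k!)^σ ((n - k)!)^σ ≤ (n!)^σ`, so the factorials and the powers of `b` factor out, and
what is left is the weight `w n = c^{1 - δ_{n,0}} (c + 1)^{n - 1}`, the solution of
`w 0 = 1`, `w n = c ∑_{j < n} w j`.
-/

open Finset
open scoped Nat

def Finsupp.choose {ι : Type*} (ν m : ι →₀ ℕ) : ℕ := ∏ i ∈ ν.support, (ν i).choose (m i)

section Vandermonde

variable {ι : Type*} [DecidableEq ι]

theorem Finsupp.Iic_eq_finsupp (ν : ι →₀ ℕ) :
    Iic ν = ν.support.finsupp fun i => Iic (ν i) := by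
  ext m
  simp only [mem_Iic, mem_finsupp_iff, Finsupp.le_def]
  refine ⟨fun h => ⟨fun i hi => ?_, fun i _ => h i⟩, fun h i => ?_⟩
  · exact Finsupp.mem_support_iff.2 fun h0 =>
      Finsupp.mem_support_iff.1 hi (Nat.le_zero.1 (h0 ▸ h i))
  · by_cases hi : i ∈ ν.support
    · exact h.2 i hi
    · rw [Finsupp.notMem_support_iff.1 fun h' => hi (h.1 h')]
      exact Nat.zero_le _

theorem Finsupp.sum_Iic_prod {R : Type*} [CommSemiring R] (ν : ι →₀ ℕ) (f : ι → ℕ → R) :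
    ∑ m ∈ Iic ν, ∏ i ∈ ν.support, f i (m i) = ∏ i ∈ ν.support, ∑ k ∈ Iic (ν i), f i k := by
  rw [Finsupp.Iic_eq_finsupp, Finset.finsupp, sum_map, prod_sum]
  refine Finset.sum_congr (by congr!) fun p _ => ?_
  rw [← prod_attach]
  exact Finset.prod_congr rfl fun i _ => by simp [Finsupp.indicator_of_mem i.2]

theorem Finsupp.sum_Iic_choose_mul_pow {R : Type*} [CommSemiring R] (ν : ι →₀ ℕ) (x : R) :
    ∑ m ∈ Iic ν, (ν.choose m : R) * x ^ m.degree = (1 + x) ^ ν.degree := by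
  have hterm : ∀ m ∈ Iic ν, (ν.choose m : R) * x ^ m.degree =
      ∏ i ∈ ν.support, ((ν i).choose (m i) * x ^ m i) := by
    intro m hm
    rw [prod_mul_distrib, prod_pow_eq_pow_sum, Finsupp.choose, Nat.cast_prod,
      Finsupp.degree_apply, sum_subset (Finsupp.support_mono (mem_Iic.1 hm))
        fun i _ hi => Finsupp.notMem_support_iff.1 hi]
  rw [Finset.sum_congr rfl hterm, Finsupp.sum_Iic_prod ν fun i k => ((ν i).choose k : R) * x ^ k,
    Finsupp.degree_apply, ← prod_pow_eq_pow_sum]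
  refine Finset.prod_congr rfl fun i _ => ?_
  rw [← Nat.range_succ_eq_Iic, add_comm 1 x, add_pow]
  simp only [one_pow, mul_one, mul_comm]

theorem Finsupp.sum_Iic_choose_of_degree_eq (ν : ι →₀ ℕ) (k : ℕ) :
    ∑ m ∈ Iic ν with m.degree = k, ν.choose m = ν.degree.choose k := by
  have := congrArg (Polynomial.coeff · k)
    (Finsupp.sum_Iic_choose_mul_pow ν (Polynomial.X : Polynomial ℕ))
  simpa [Polynomial.finsetSum_coeff, Polynomial.coeff_X_pow, Polynomial.coeff_one_add_X_pow,
    sum_filter, eq_comm] using this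

theorem Finsupp.sum_Iic_choose_smul {M : Type*} [AddCommMonoid M] (ν : ι →₀ ℕ) (g : ℕ → M) :
    ∑ m ∈ Iic ν, ν.choose m • g m.degree =
      ∑ k ∈ range (ν.degree + 1), ν.degree.choose k • g k := by
  have hmaps : ∀ m ∈ Iic ν, m.degree ∈ range (ν.degree + 1) := fun m hm =>
    mem_range_succ_iff.2 (Finsupp.degree_mono (mem_Iic.1 hm))
  rw [← sum_fiberwise_of_maps_to hmaps]
  refine Finset.sum_congr rfl fun k _ => ?_
  rw [← Finsupp.sum_Iic_choose_of_degree_eq, sum_smul]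
  exact Finset.sum_congr rfl fun m hm => by rw [(mem_filter.1 hm).2]

theorem Finsupp.sum_erase_zero_Iic_choose_smul {M : Type*} [AddCommGroup M] (ν : ι →₀ ℕ)
    (g : ℕ → M) :
    ∑ m ∈ (Iic ν).erase 0, ν.choose m • g m.degree =
      ∑ k ∈ range ν.degree, ν.degree.choose (k + 1) • g (k + 1) := by
  rw [sum_erase_eq_sub (mem_Iic.2 zero_le), Finsupp.sum_Iic_choose_smul, sum_range_succ']
  simp [Finsupp.choose]

end Vandermonde

theorem Finsupp.degree_tsub {ι : Type*} {m ν : ι →₀ ℕ} (h : m ≤ ν) :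
    (ν - m).degree = ν.degree - m.degree := by
  have := map_add Finsupp.degree (ν - m) m
  rw [tsub_add_cancel_of_le h] at this
  omega

theorem Finsupp.tsub_lt_self {ι : Type*} {m ν : ι →₀ ℕ} (hm : m ≠ 0) (h : m ≤ ν) :
    ν - m < ν :=
  lt_of_le_of_ne tsub_le_self fun he => hm <| by simpa [he] using tsub_add_cancel_of_le h

theorem Finsupp.prod_pow_mul_prod_pow_tsub {ι M : Type*} [CommMonoid M] (b : ι → M)
    {m ν : ι →₀ ℕ} (h : m ≤ ν) :
    ((m.prod fun j e => b j ^ e) * (ν - m).prod fun j e => b j ^ e) =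
      ν.prod fun j e => b j ^ e := by
  rw [← Finsupp.prod_add_index' (fun _ => pow_zero _) (fun _ _ _ => pow_add _ _ _),
    add_tsub_cancel_of_le h]

theorem choose_mul_factorial_rpow_le {σ : ℝ} (hσ : 1 ≤ σ) {n k : ℕ} (hk : k ≤ n) :
    (n.choose k : ℝ) * ((k ! : ℝ) ^ σ * ((n - k)! : ℝ) ^ σ) ≤ (n ! : ℝ) ^ σ := by
  have hchoose : (n.choose k : ℝ) ≤ (n.choose k : ℝ) ^ σ :=
    Real.self_le_rpow_of_one_le (by exact_mod_cast Nat.choose_pos hk) hσ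
  calc (n.choose k : ℝ) * ((k ! : ℝ) ^ σ * ((n - k)! : ℝ) ^ σ)
      ≤ (n.choose k : ℝ) ^ σ * ((k ! : ℝ) ^ σ * ((n - k)! : ℝ) ^ σ) := by gcongr
    _ = (n ! : ℝ) ^ σ := by
      rw [← Real.mul_rpow (by positivity) (by positivity),
        ← Real.mul_rpow (by positivity) (by positivity), ← mul_assoc]
      exact_mod_cast congrArg (fun x : ℕ => (x : ℝ) ^ σ) (Nat.choose_mul_factorial_mul_factorial hk)

def geomWeight (c : ℝ) (n : ℕ) : ℝ := c ^ (if n = 0 then 0 else 1) * (c + 1) ^ (n - 1)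

theorem geomWeight_succ (c : ℝ) (n : ℕ) : geomWeight c (n + 1) = c * (c + 1) ^ n := by
  simp [geomWeight]

theorem geomWeight_nonneg {c : ℝ} (hc : 0 ≤ c) (n : ℕ) : 0 ≤ geomWeight c n := by
  unfold geomWeight
  positivity

theorem mul_sum_range_geomWeight (c : ℝ) {n : ℕ} (hn : 0 < n) :
    c * ∑ j ∈ range n, geomWeight c j = geomWeight c n := by
  induction n, hn using Nat.le_induction with
  | base => simp [geomWeight]
  | succ n hn ih =>
    obtain ⟨k, rfl⟩ := Nat.exists_eq_add_of_le' hn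
    rw [sum_range_succ, mul_add, ih, geomWeight_succ, geomWeight_succ]
    ring

theorem mul_sum_choose_mul_factorial_rpow_le {c σ : ℝ} (hc : 0 ≤ c) (hσ : 1 ≤ σ) {n : ℕ}
    (hn : 0 < n) :
    c * ∑ k ∈ range n, (n.choose (k + 1) : ℝ) *
        (((k + 1)! : ℝ) ^ σ * ((n - (k + 1))! : ℝ) ^ σ * geomWeight c (n - (k + 1))) ≤
      (n ! : ℝ) ^ σ * geomWeight c n := by
  calc _ ≤ c * ∑ k ∈ range n, (n ! : ℝ) ^ σ * geomWeight c (n - 1 - k) := by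
        refine mul_le_mul_of_nonneg_left (sum_le_sum fun k hk => ?_) hc
        rw [show n - 1 - k = n - (k + 1) by omega, ← mul_assoc]
        exact mul_le_mul_of_nonneg_right (choose_mul_factorial_rpow_le hσ (mem_range.1 hk))
          (geomWeight_nonneg hc _)
    _ = (n ! : ℝ) ^ σ * (c * ∑ j ∈ range n, geomWeight c j) := by
        rw [← mul_sum, sum_range_reflect (geomWeight c) n]
        ring
    _ = (n ! : ℝ) ^ σ * geomWeight c n := by rw [mul_sum_range_geomWeight c hn]

theorem le_geomWeight_mul_factorial_rpow_mul_prod {ι : Type*} [DecidableEq ι] {c₀ c σ : ℝ}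
    (hc₀ : 0 ≤ c₀) (hc : 0 ≤ c) (hσ : 1 ≤ σ) {b : ι → ℝ} (hb : ∀ j, 0 ≤ b j)
    {Ξ : (ι →₀ ℕ) → ℝ} (h0 : Ξ 0 ≤ c₀)
    (hrec : ∀ ν ≠ 0, Ξ ν ≤ c * ∑ m ∈ (Iic ν).erase 0,
      (ν.choose m : ℝ) * (m.degree ! : ℝ) ^ σ * (m.prod fun j e => b j ^ e) * Ξ (ν - m))
    (ν : ι →₀ ℕ) :
    Ξ ν ≤ c₀ * geomWeight c ν.degree * (ν.degree ! : ℝ) ^ σ * ν.prod fun j e => b j ^ e := by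
  have hprod : ∀ μ : ι →₀ ℕ, 0 ≤ μ.prod fun j e => b j ^ e :=
    fun μ => prod_nonneg fun j _ => pow_nonneg (hb j) _
  induction ν using WellFoundedLT.induction with
  | _ ν ih =>
  rcases eq_or_ne ν 0 with rfl | hν
  · simpa [geomWeight] using h0
  set n := ν.degree
  set B := ν.prod fun j e => b j ^ e with hB
  have hn : 0 < n := Nat.pos_of_ne_zero fun h => hν ((Finsupp.degree_eq_zero_iff ν).1 h)
  let G : ℕ → ℝ := fun k => (k ! : ℝ) ^ σ * ((n - k)! : ℝ) ^ σ * geomWeight c (n - k)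
  have hterm : ∀ m ∈ (Iic ν).erase 0,
      (ν.choose m : ℝ) * (m.degree ! : ℝ) ^ σ * (m.prod fun j e => b j ^ e) * Ξ (ν - m) ≤
        c₀ * B * (ν.choose m • G m.degree) := by
    intro m hm
    obtain ⟨hm0, hmν⟩ := mem_erase.1 hm
    replace hmν := mem_Iic.1 hmν
    have := hprod m
    calc (ν.choose m : ℝ) * (m.degree ! : ℝ) ^ σ * (m.prod fun j e => b j ^ e) * Ξ (ν - m)
        ≤ (ν.choose m : ℝ) * (m.degree ! : ℝ) ^ σ * (m.prod fun j e => b j ^ e) *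
            (c₀ * geomWeight c (n - m.degree) * ((n - m.degree)! : ℝ) ^ σ *
              (ν - m).prod fun j e => b j ^ e) := by
          rw [← Finsupp.degree_tsub hmν]
          gcongr
          exact ih _ (Finsupp.tsub_lt_self hm0 hmν)
      _ = c₀ * B * (ν.choose m • G m.degree) := by
          rw [hB, ← Finsupp.prod_pow_mul_prod_pow_tsub b hmν, nsmul_eq_mul]
          ring
  calc Ξ ν ≤ c * ∑ m ∈ (Iic ν).erase 0,
        (ν.choose m : ℝ) * (m.degree ! : ℝ) ^ σ * (m.prod fun j e => b j ^ e) * Ξ (ν - m) :=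
        hrec ν hν
    _ ≤ c * ∑ m ∈ (Iic ν).erase 0, c₀ * B * (ν.choose m • G m.degree) :=
        mul_le_mul_of_nonneg_left (sum_le_sum hterm) hc
    _ = c₀ * B * (c * ∑ k ∈ range n, (n.choose (k + 1) : ℝ) * G (k + 1)) := by
        rw [← mul_sum, Finsupp.sum_erase_zero_Iic_choose_smul]
        simp only [nsmul_eq_mul]
        ring
    _ ≤ c₀ * B * ((n ! : ℝ) ^ σ * geomWeight c n) :=
        mul_le_mul_of_nonneg_left (mul_sum_choose_mul_factorial_rpow_le hc hσ hn)
          (mul_nonneg hc₀ (hprod ν))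
    _ = c₀ * geomWeight c n * (n ! : ℝ) ^ σ * B := by ring

theorem stmt_6 (c₀ c : ℝ) (hc₀ : 0 < c₀) (hc : 0 < c) (σ : ℝ) (hσ : 1 ≤ σ)
    (b : ℕ → ℝ) (hb : ∀ j, 0 ≤ b j) (Ξ : (ℕ →₀ ℕ) → ℝ)
    (h0 : Ξ 0 ≤ c₀)
    (hrec : ∀ ν : ℕ →₀ ℕ, ν ≠ 0 →
      Ξ ν ≤ c * ∑ m ∈ (Finset.Iic ν).erase 0,
        (∏ j ∈ ν.support, (Nat.choose (ν j) (m j) : ℝ)) *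
          (Nat.factorial (m.sum fun _ k => k) : ℝ) ^ σ *
          (∏ j ∈ m.support, b j ^ m j) * Ξ (ν - m)) :
    ∀ ν : ℕ →₀ ℕ,
      Ξ ν ≤ c₀ * c ^ (if (ν.sum fun _ k => k) = 0 then 0 else 1) *
        (c + 1) ^ (max ((ν.sum fun _ k => k) - 1) 0) *
        (Nat.factorial (ν.sum fun _ k => k) : ℝ) ^ σ *
        ∏ j ∈ ν.support, b j ^ ν j := by
  intro ν
  have hrec' : ∀ ν ≠ 0, Ξ ν ≤ c * ∑ m ∈ (Iic ν).erase 0,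
      (ν.choose m : ℝ) * (m.degree ! : ℝ) ^ σ * (m.prod fun j e => b j ^ e) * Ξ (ν - m) := by
    simp only [Finsupp.choose, Nat.cast_prod]
    exact hrec
  rw [Nat.max_zero, mul_assoc c₀]
  exact le_geomWeight_mul_factorial_rpow_mul_prod hc₀.le hc.le hσ hb h0 hrec' ν
end
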